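/- There exists a constant C > 0 such that for every integer n ≥ 1 and every z ∈ ℤ², simple random walk on ℤ² started at the origin satisfies P(S_n = z) ≤ C/n. -/

import Mathlib

/-!
In the rotated coordinates `z.1 + z.2` and `z.1 - z.2` each step of the walk moves both
coordinates by `±1`, and the four sign combinations are exactly the four steps. Hence
`P(S_n = z) = N_n(z.1 + z.2) N_n(z.1 - z.2) / 4 ^ n`, where `N_n(k)` counts the `±1` paths of
length `n` from `0` to `k`. Each `N_n(k)` is a binomial coefficient, so at most
`choose n (n / 2)`, and the recursion for central binomial coefficients gives
`(n + 1) * choose n (n / 2) ^ 2 ≤ 4 ^ n`; thus `P(S_n = z) ≤ 1 / (n + 1)`.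
-/

open MeasureTheory ProbabilityTheory

/-- The uniform step distribution on the four unit steps of `ℤ²`. -/
noncomputable def stepDist : Measure (ℤ × ℤ) :=
  (4 : ENNReal)⁻¹ • (Measure.dirac (1, 0) + Measure.dirac (-1, 0) +
    Measure.dirac (0, 1) + Measure.dirac (0, -1))

/-- The simple random walk started at `x`, after `n` steps. -/
def walkFrom {Ω : Type} (X : ℕ → Ω → ℤ × ℤ) (x : ℤ × ℤ) (n : ℕ) (ω : Ω) : ℤ × ℤ :=
  x + ∑ i ∈ Finset.Icc 1 n, X i ω

def pathCount : ℕ → ℤ → ℕ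
  | 0, k => if k = 0 then 1 else 0
  | n + 1, k => pathCount n (k - 1) + pathCount n (k + 1)

lemma pathCount_eq_zero (n : ℕ) (k : ℤ) (hk : ∀ j : ℕ, k ≠ 2 * j - n) :
    pathCount n k = 0 := by
  induction n generalizing k with
  | zero => simpa [pathCount] using hk 0
  | succ n ih =>
    rw [pathCount, ih, ih, add_zero] <;> intro j hj
    · exact hk j (by push_cast at hj ⊢; omega)
    · exact hk (j + 1) (by push_cast at hj ⊢; omega)

lemma pathCount_two_mul_sub (n j : ℕ) : pathCount n (2 * j - n) = n.choose j := by
  induction n generalizing j with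
  | zero => cases j <;> simp [pathCount]; omega
  | succ n ih =>
    rcases j with _ | j
    · rw [pathCount, pathCount_eq_zero _ _ (fun j => by omega)]
      simpa using ih 0
    · rw [pathCount, Nat.choose_succ_succ', ← ih, ← ih]
      push_cast
      ring_nf

lemma pathCount_le_choose_half (n : ℕ) (k : ℤ) : pathCount n k ≤ n.choose (n / 2) := by
  by_cases hk : ∃ j : ℕ, k = 2 * j - n
  · obtain ⟨j, rfl⟩ := hk
    exact pathCount_two_mul_sub n j ▸ Nat.choose_le_middle j n
  · push Not at hk
    simp [pathCount_eq_zero n k hk]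

lemma two_mul_add_one_mul_centralBinom_sq_le (m : ℕ) :
    (2 * m + 1) * m.centralBinom ^ 2 ≤ 16 ^ m := by
  induction m with
  | zero => simp
  | succ m ih =>
    refine Nat.le_of_mul_le_mul_left (c := (m + 1) ^ 2) ?_ (by positivity)
    calc (m + 1) ^ 2 * ((2 * (m + 1) + 1) * (m + 1).centralBinom ^ 2)
        = (2 * m + 3) * ((m + 1) * (m + 1).centralBinom) ^ 2 := by ring
      _ = 4 * (2 * m + 3) * (2 * m + 1) * ((2 * m + 1) * m.centralBinom ^ 2) := by
        rw [Nat.succ_mul_centralBinom_succ]; ring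
      _ ≤ 4 * (2 * m + 3) * (2 * m + 1) * 16 ^ m := by gcongr
      _ ≤ (m + 1) ^ 2 * 16 * 16 ^ m := Nat.mul_le_mul_right _ (by nlinarith)
      _ = (m + 1) ^ 2 * 16 ^ (m + 1) := by ring

lemma succ_mul_choose_half_sq_le (n : ℕ) : (n + 1) * n.choose (n / 2) ^ 2 ≤ 4 ^ n := by
  have sixteen : (16 : ℕ) = 4 ^ 2 := rfl
  rcases n.even_or_odd' with ⟨m, rfl | rfl⟩
  · rw [Nat.mul_div_cancel_left m two_pos, ← Nat.centralBinom_eq_two_mul_choose, pow_mul,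
      ← sixteen]
    exact two_mul_add_one_mul_centralBinom_sq_le m
  · have half : (2 * m + 1) / 2 = m := by omega
    have central : (m + 1).centralBinom = 2 * (2 * m + 1).choose m := by
      rw [Nat.centralBinom_eq_two_mul_choose, mul_add_one, Nat.choose_succ_succ',
        Nat.choose_symm_half, ← two_mul]
    rw [half]
    refine Nat.le_of_mul_le_mul_left (c := 4) ?_ (by norm_num)
    calc 4 * ((2 * m + 1 + 1) * (2 * m + 1).choose m ^ 2)
        = (2 * (m + 1)) * (m + 1).centralBinom ^ 2 := by rw [central]; ring
      _ ≤ (2 * (m + 1) + 1) * (m + 1).centralBinom ^ 2 := by gcongr; omega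
      _ ≤ 16 ^ (m + 1) := two_mul_add_one_mul_centralBinom_sq_le (m + 1)
      _ = 4 * 4 ^ (2 * m + 1) := by rw [sixteen, ← pow_mul]; ring

/-- The number of nearest-neighbour paths of length `n` in `ℤ²` from `0` to `z`: in the
coordinates `z.1 + z.2` and `z.1 - z.2` such a path is a pair of independent `±1` paths. -/
def latticePathCount (n : ℕ) (z : ℤ × ℤ) : ℕ :=
  pathCount n (z.1 + z.2) * pathCount n (z.1 - z.2)

lemma latticePathCount_zero (z : ℤ × ℤ) : latticePathCount 0 z = if z = 0 then 1 else 0 := by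
  obtain ⟨a, b⟩ := z
  simp only [latticePathCount, pathCount, Prod.mk_eq_zero]
  split_ifs <;> omega

lemma latticePathCount_succ (n : ℕ) (z : ℤ × ℤ) :
    latticePathCount (n + 1) z =
      latticePathCount n (z - (1, 0)) + latticePathCount n (z - (-1, 0)) +
        latticePathCount n (z - (0, 1)) + latticePathCount n (z - (0, -1)) := by
  obtain ⟨a, b⟩ := z
  simp only [latticePathCount, pathCount, Prod.mk_sub_mk]
  ring_nf

lemma succ_mul_latticePathCount_le (n : ℕ) (z : ℤ × ℤ) :
    (n + 1) * latticePathCount n z ≤ 4 ^ n :=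
  calc (n + 1) * latticePathCount n z ≤ (n + 1) * (n.choose (n / 2) * n.choose (n / 2)) := by
        unfold latticePathCount; gcongr <;> exact pathCount_le_choose_half n _
    _ = (n + 1) * n.choose (n / 2) ^ 2 := by ring
    _ ≤ 4 ^ n := succ_mul_choose_half_sq_le n

lemma measure_add_eq_of_indepFun {Ω : Type*} [MeasurableSpace Ω] {μ : Measure Ω}
    [IsFiniteMeasure μ] {S Y : Ω → ℤ × ℤ} (hS : Measurable S) (hY : Measurable Y)
    (hSY : IndepFun S Y μ) (hYlaw : μ.map Y = stepDist) (z : ℤ × ℤ) :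
    μ {ω | S ω + Y ω = z} =
      4⁻¹ * (μ (S ⁻¹' {z - (1, 0)}) + μ (S ⁻¹' {z - (-1, 0)}) +
        μ (S ⁻¹' {z - (0, 1)}) + μ (S ⁻¹' {z - (0, -1)})) := by
  have hslice (e : ℤ × ℤ) : (fun x => (x, e)) ⁻¹' {p : (ℤ × ℤ) × (ℤ × ℤ) | p.1 + p.2 = z} =
      {z - e} := by
    ext; simp [eq_sub_iff_add_eq]
  have hpair :
      {ω | S ω + Y ω = z} = (fun ω => (S ω, Y ω)) ⁻¹' {p | p.1 + p.2 = z} := rfl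
  rw [hpair, ← Measure.map_apply (hS.prodMk hY) .of_discrete,
    (indepFun_iff_map_prod_eq_prod_map_map hS.aemeasurable hY.aemeasurable).1 hSY, hYlaw,
    stepDist, Measure.prod_smul_right]
  simp only [Measure.prod_add, Measure.prod_dirac, Measure.smul_apply, Measure.add_apply,
    Measure.map_apply measurable_prodMk_right .of_discrete, hslice,
    Measure.map_apply hS .of_discrete, smul_eq_mul]

lemma walkFrom_succ {Ω : Type} (X : ℕ → Ω → ℤ × ℤ) (x : ℤ × ℤ) (n : ℕ) :
    walkFrom X x (n + 1) = fun ω => walkFrom X x n ω + X (n + 1) ω := by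
  funext ω
  simp [walkFrom, Finset.sum_Icc_succ_top, add_assoc]

section Walk

variable {Ω : Type} [MeasurableSpace Ω] {μ : Measure Ω} {X : ℕ → Ω → ℤ × ℤ}

lemma measurable_walkFrom (hX : ∀ i, Measurable (X i)) (x : ℤ × ℤ) (n : ℕ) :
    Measurable (walkFrom X x n) :=
  measurable_const.add (Finset.measurable_fun_sum _ fun i _ => hX i)

lemma indepFun_walkFrom (hX : ∀ i, Measurable (X i)) (hindep : iIndepFun X μ) (x : ℤ × ℤ)
    (n : ℕ) : IndepFun (walkFrom X x n) (X (n + 1)) μ := by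
  have hsum : walkFrom X x n = (x + ·) ∘ ∑ i ∈ Finset.Icc 1 n, X i := by
    funext ω; simp [walkFrom]
  rw [hsum]
  exact (hindep.indepFun_finsetSum_of_notMem hX (by simp)).comp (measurable_const_add x)
    measurable_id

lemma measure_walkFrom_eq [IsProbabilityMeasure μ] (hX : ∀ i, Measurable (X i))
    (hlaw : ∀ i, μ.map (X i) = stepDist) (hindep : iIndepFun X μ) (x : ℤ × ℤ) (n : ℕ)
    (z : ℤ × ℤ) : μ {ω | walkFrom X x n ω = z} = latticePathCount n (z - x) / 4 ^ n := by
  induction n generalizing z with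
  | zero =>
    by_cases h : x = z
    · simp [walkFrom, h, latticePathCount_zero]
    · simp [walkFrom, h, latticePathCount_zero, sub_eq_zero, Ne.symm h]
  | succ n ih =>
    rw [walkFrom_succ, measure_add_eq_of_indepFun (measurable_walkFrom hX x n) (hX _)
      (indepFun_walkFrom hX hindep x n) (hlaw _)]
    simp only [Set.preimage, Set.mem_singleton_iff, ih, sub_right_comm _ _ x,
      latticePathCount_succ n (z - x)]
    push_cast
    simp only [div_eq_mul_inv, ENNReal.inv_pow]
    ring

end Walk

/-- There is a constant `C > 0` such that for every `n ≥ 1` and every `z ∈ ℤ²`,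
simple random walk on `ℤ²` started at the origin satisfies `P(S_n = z) ≤ C / n`. -/
theorem stmt5 :
    ∃ C : ℝ, 0 < C ∧
      ∀ (Ω : Type) [MeasurableSpace Ω] (μ : Measure Ω) [IsProbabilityMeasure μ]
        (X : ℕ → Ω → ℤ × ℤ),
        (∀ i, Measurable (X i)) →
        (∀ i, μ.map (X i) = stepDist) →
        iIndepFun X μ →
        ∀ (n : ℕ), 1 ≤ n → ∀ z : ℤ × ℤ,
          (μ {ω | walkFrom X 0 n ω = z}).toReal ≤ C / n := by
  refine ⟨1, one_pos, fun Ω _ μ _ X hX hlaw hindep n hn z => ?_⟩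
  have hcount : latticePathCount n (z - 0) * n ≤ 1 * 4 ^ n := by
    nlinarith [succ_mul_latticePathCount_le n (z - 0)]
  rw [measure_walkFrom_eq hX hlaw hindep, ENNReal.toReal_div, ENNReal.toReal_pow,
    ENNReal.toReal_natCast, ENNReal.toReal_ofNat, div_le_div_iff₀ (by positivity) (by positivity)]
  exact_mod_cast hcount
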